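/- Let β > 0 and define d̂(z) = z/(z − β²) for complex z ≠ β². Then for every complex z with Re z < β²/2, one has |d̂(z)| < 1 and the expansion ∑_{p=0}^{∞} L_p^{(−1)}(β²) · d̂(z)^p converges absolutely with sum equal to e^{z}. -/

import Mathlib

open Real Finset Complex

/-- The generalized Laguerre polynomial of parameter `λ = -1`. -/
noncomputable def laguerreM1 : ℕ → ℝ → ℝ
  | 0, _ => 1
  | n + 1, x => ∑ k ∈ Finset.range (n + 2),
      (-1) ^ k * (n.choose (n + 1 - k) : ℝ) * x ^ k / (Nat.factorial k : ℝ)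

/-!
For `n ≥ 1`, `L_n^{(-1)}(x) = ∑_{j<n} C(n-1, j) (-x)^{j+1} / (j+1)!`, while for `|t| < 1`
`(t/(1-t))^{j+1} = ∑_m C(j+m, j) t^{j+m+1}`. Summing the resulting absolutely convergent double
series once along `j` and once along the antidiagonals `j + m = n` gives the generating function
`∑ L_n^{(-1)}(x) t^n = exp(-x t/(1-t))`. For `t = z/(z-β²)` one has `-β² t/(1-t) = z`, and
`|t| < 1` because `Re z < β²/2` says that `z` is closer to `0` than to `β²`.
-/

section Antidiagonal

variable {A E : Type*} [AddMonoid A] [HasAntidiagonal A] [NormedAddCommGroup E]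
  {f : A × A → E}

theorem hasSum_sum_antidiagonal_of_summable_norm [CompleteSpace E]
    (hf : Summable fun q => ‖f q‖) :
    HasSum (fun n => ∑ q ∈ antidiagonal n, f q) (∑' q, f q) := by
  let e := HasAntidiagonal.sigmaAntidiagonalEquivProd (A := A)
  have hs : Summable (f ∘ e) := (e.summable_iff.mpr hf).of_norm
  rw [← e.tsum_eq]
  simp only [← sum_coe_sort (antidiagonal _)]
  exact hs.hasSum.sigma fun n => hasSum_fintype _

theorem summable_norm_sum_antidiagonal_of_summable_norm (hf : Summable fun q => ‖f q‖) :
    Summable fun n => ‖∑ q ∈ antidiagonal n, f q‖ :=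
  .of_nonneg_of_le (fun _ => norm_nonneg _) (fun _ => norm_sum_le _ _)
    (hasSum_sum_antidiagonal_of_summable_norm (f := fun q => ‖f q‖)
      (by simpa only [norm_norm])).summable

end Antidiagonal

theorem sum_antidiagonal_mul_choose_mul_pow {R : Type*} [CommSemiring R] (a : ℕ → R) (t : R)
    (n : ℕ) :
    ∑ q ∈ antidiagonal n, a q.1 * ((q.1 + q.2).choose q.1 * t ^ (q.1 + q.2 + 1))
      = (∑ j ∈ range (n + 1), n.choose j * a j) * t ^ (n + 1) := by
  rw [sum_mul, ← Nat.sum_antidiagonal_eq_sum_range_succ fun j _ => n.choose j * a j * t ^ (n + 1)]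
  refine sum_congr rfl fun q hq => ?_
  rw [mem_antidiagonal.mp hq]
  ring

section EulerTransform

variable {𝕜 : Type*} [RCLike 𝕜]

theorem hasSum_choose_mul_pow_add_succ {t : 𝕜} (ht : ‖t‖ < 1) (j : ℕ) :
    HasSum (fun m : ℕ => ((j + m).choose j : 𝕜) * t ^ (j + m + 1))
      ((t / (1 - t)) ^ (j + 1)) := by
  have h := (hasSum_choose_mul_geometric_of_norm_lt_one j ht).mul_left (t ^ (j + 1))
  rw [← div_eq_mul_one_div, ← div_pow] at h
  refine h.congr_fun fun m => ?_
  rw [add_comm j m, add_right_comm, pow_add]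
  ring

variable {a : ℕ → 𝕜} {t : 𝕜}

theorem summable_norm_mul_choose_mul_pow (ht : ‖t‖ < 1)
    (ha : Summable fun j => ‖a j‖ * (‖t‖ / (1 - ‖t‖)) ^ (j + 1)) :
    Summable fun q : ℕ × ℕ => ‖a q.1 * ((q.1 + q.2).choose q.1 * t ^ (q.1 + q.2 + 1))‖ := by
  have fiber (j : ℕ) : HasSum (fun m => ‖a j * ((j + m).choose j * t ^ (j + m + 1))‖)
      (‖a j‖ * (‖t‖ / (1 - ‖t‖)) ^ (j + 1)) := by
    simpa only [norm_mul, norm_pow, RCLike.norm_natCast] using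
      (hasSum_choose_mul_pow_add_succ (t := ‖t‖) (by rwa [norm_norm]) j).mul_left ‖a j‖
  refine (summable_prod_of_nonneg fun _ => norm_nonneg _).mpr
    ⟨fun j => (fiber j).summable, ?_⟩
  simpa only [(fiber _).tsum_eq] using ha

theorem hasSum_mul_choose_mul_pow (ht : ‖t‖ < 1)
    (ha : Summable fun j => ‖a j‖ * (‖t‖ / (1 - ‖t‖)) ^ (j + 1)) :
    HasSum (fun q : ℕ × ℕ => a q.1 * ((q.1 + q.2).choose q.1 * t ^ (q.1 + q.2 + 1)))
      (∑' j, a j * (t / (1 - t)) ^ (j + 1)) := by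
  have hs := (summable_norm_mul_choose_mul_pow ht ha).of_norm
  rw [(hs.hasSum.prod_fiberwise fun j =>
    (hasSum_choose_mul_pow_add_succ ht j).mul_left (a j)).tsum_eq]
  exact hs.hasSum

theorem hasSum_sum_choose_mul_mul_pow (ht : ‖t‖ < 1)
    (ha : Summable fun j => ‖a j‖ * (‖t‖ / (1 - ‖t‖)) ^ (j + 1)) :
    HasSum (fun n => (∑ j ∈ range (n + 1), n.choose j * a j) * t ^ (n + 1))
      (∑' j, a j * (t / (1 - t)) ^ (j + 1)) := by
  simp_rw [← sum_antidiagonal_mul_choose_mul_pow, ← (hasSum_mul_choose_mul_pow ht ha).tsum_eq]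
  exact hasSum_sum_antidiagonal_of_summable_norm (summable_norm_mul_choose_mul_pow ht ha)

theorem summable_norm_sum_choose_mul_mul_pow (ht : ‖t‖ < 1)
    (ha : Summable fun j => ‖a j‖ * (‖t‖ / (1 - ‖t‖)) ^ (j + 1)) :
    Summable fun n => ‖(∑ j ∈ range (n + 1), n.choose j * a j) * t ^ (n + 1)‖ := by
  simp_rw [← sum_antidiagonal_mul_choose_mul_pow]
  exact summable_norm_sum_antidiagonal_of_summable_norm (summable_norm_mul_choose_mul_pow ht ha)

end EulerTransform

theorem Complex.hasSum_pow_succ_div_factorial (w : ℂ) :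
    HasSum (fun j => w ^ (j + 1) / (j + 1).factorial) (cexp w - 1) := by
  have h := NormedSpace.expSeries_div_hasSum_exp w
  rw [← Complex.exp_eq_exp_ℂ, ← hasSum_nat_add_iff' 1] at h
  simpa using h

theorem Complex.summable_norm_pow_succ_div_factorial_mul_pow (w : ℂ) (r : ℝ) :
    Summable fun j => ‖w ^ (j + 1) / (j + 1).factorial‖ * r ^ (j + 1) := by
  refine ((summable_nat_add_iff 1).mpr
    (Real.summable_pow_div_factorial (‖w‖ * r))).congr fun j => ?_
  rw [norm_div, norm_pow, Complex.norm_natCast, mul_pow]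
  ring

theorem laguerreM1_succ (n : ℕ) (x : ℝ) :
    laguerreM1 (n + 1) x
      = ∑ j ∈ range (n + 1), (n.choose j : ℝ) * ((-x) ^ (j + 1) / (j + 1).factorial) := by
  rw [laguerreM1, sum_range_succ', Nat.choose_eq_zero_of_lt (by omega : n < n + 1 - 0)]
  simp only [Nat.cast_zero, mul_zero, zero_mul, zero_div, add_zero]
  refine sum_congr rfl fun j hj => ?_
  rw [show n + 1 - (j + 1) = n - j by omega, Nat.choose_symm (by simpa [Nat.lt_succ_iff] using hj),
    neg_pow x, pow_succ (-1 : ℝ)]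
  ring

theorem laguerreM1_succ_ofReal (n : ℕ) (x : ℝ) :
    (laguerreM1 (n + 1) x : ℂ)
      = ∑ j ∈ range (n + 1), n.choose j * ((-x : ℂ) ^ (j + 1) / (j + 1).factorial) := by
  rw [laguerreM1_succ]
  push_cast
  rfl

theorem hasSum_laguerreM1_mul_pow (x : ℝ) {t : ℂ} (ht : ‖t‖ < 1) :
    HasSum (fun n => (laguerreM1 n x : ℂ) * t ^ n) (cexp (-x * (t / (1 - t)))) := by
  have h := hasSum_sum_choose_mul_mul_pow ht
    (Complex.summable_norm_pow_succ_div_factorial_mul_pow (-x) (‖t‖ / (1 - ‖t‖)))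
  simp_rw [← laguerreM1_succ_ofReal, div_mul_eq_mul_div, ← mul_pow,
    (Complex.hasSum_pow_succ_div_factorial _).tsum_eq] at h
  rw [← hasSum_nat_add_iff' 1]
  simpa [laguerreM1] using h

theorem summable_norm_laguerreM1_mul_pow (x : ℝ) {t : ℂ} (ht : ‖t‖ < 1) :
    Summable fun n => ‖(laguerreM1 n x : ℂ) * t ^ n‖ := by
  rw [← summable_nat_add_iff 1]
  simpa only [laguerreM1_succ_ofReal] using summable_norm_sum_choose_mul_mul_pow ht
    (Complex.summable_norm_pow_succ_div_factorial_mul_pow (-x) (‖t‖ / (1 - ‖t‖)))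

theorem Complex.norm_lt_norm_sub_ofReal {c : ℝ} (hc : 0 < c) {z : ℂ} (hz : z.re < c / 2) :
    ‖z‖ < ‖z - c‖ := by
  refine lt_of_pow_lt_pow_left₀ 2 (norm_nonneg _) ?_
  rw [Complex.sq_norm, Complex.sq_norm, normSq_apply, normSq_apply, sub_re, sub_im, ofReal_re,
    ofReal_im, sub_zero]
  nlinarith

theorem neg_mul_div_one_sub_div_sub {K : Type*} [Field K] {z c : K} (hc : c ≠ 0)
    (hzc : z - c ≠ 0) : -c * (z / (z - c) / (1 - z / (z - c))) = z := by
  have hsub : 1 - z / (z - c) = -c / (z - c) := by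
    rw [one_sub_div hzc, sub_sub_cancel_left]
  rw [hsub, div_div_div_cancel_right₀ hzc, div_neg, neg_mul_neg, mul_div_cancel₀ _ hc]

/-- For `Re z < β²/2` one has `|z/(z-β²)| < 1`, and the resolvent expansion
`∑_{p=0}^∞ L_p^{(-1)}(β²) (z/(z-β²))^p` converges absolutely with sum `e^z`. -/
theorem resolvent_expansion_scalar (β : ℝ) (hβ : 0 < β) (z : ℂ)
    (hz : z.re < β ^ 2 / 2) :
    ‖z / (z - (β : ℂ) ^ 2)‖ < 1 ∧
    Summable (fun p : ℕ =>
      ‖(laguerreM1 p (β ^ 2) : ℂ) * (z / (z - (β : ℂ) ^ 2)) ^ p‖) ∧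
    ∑' p : ℕ, (laguerreM1 p (β ^ 2) : ℂ) * (z / (z - (β : ℂ) ^ 2)) ^ p
      = Complex.exp z := by
  have hcast : ((β ^ 2 : ℝ) : ℂ) = (β : ℂ) ^ 2 := by push_cast; rfl
  have hnorm := Complex.norm_lt_norm_sub_ofReal (by positivity : (0 : ℝ) < β ^ 2) hz
  rw [hcast] at hnorm
  have hzc : z - (β : ℂ) ^ 2 ≠ 0 := norm_pos_iff.mp ((norm_nonneg z).trans_lt hnorm)
  have ht : ‖z / (z - (β : ℂ) ^ 2)‖ < 1 := by
    rwa [norm_div, div_lt_one (norm_pos_iff.mpr hzc)]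
  refine ⟨ht, summable_norm_laguerreM1_mul_pow _ ht, ?_⟩
  rw [(hasSum_laguerreM1_mul_pow _ ht).tsum_eq, hcast,
    neg_mul_div_one_sub_div_sub (pow_ne_zero 2 (ofReal_ne_zero.mpr hβ.ne')) hzc]
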